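/- Let G be a group acting faithfully on a set S. The set SV_G of all homeomorphisms of 𝔠^S that are piecewise twist homeomorphisms (with respect to finite cone partitions) is a subgroup of the group of homeomorphisms of 𝔠^S: it contains the identity and is closed under composition and inversion. -/

import Mathlib

open Function Set Pointwise

/-- The Cantor set `𝔠 = ℕ → Bool`, with the product topology. -/
abbrev Cantor : Type := ℕ → Bool

/-- The space `𝔠^S` of functions `S → 𝔠`, with the product topology. -/
abbrev CantorPow (S : Type*) : Type _ := S → Cantor

/-- Prepend a finite string of bits to an infinite sequence of bits. -/
def prepend (l : List Bool) (x : Cantor) : Cantor :=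
  fun n => if h : n < l.length then l.get ⟨n, h⟩ else x (n - l.length)

/-- A prefix function: finitely supported assignment of finite binary strings. -/
def IsPrefixFun {S : Type*} (ψ : S → List Bool) : Prop :=
  {s | ψ s ≠ []}.Finite

/-- The canonical map `h_ψ : 𝔠^S → 𝔠^S` with image the cone `B(ψ)`. -/
def canonMap {S : Type*} (ψ : S → List Bool) : CantorPow S → CantorPow S :=
  fun κ s => prepend (ψ s) (κ s)

/-- The cone `B(ψ)`: all `κ` such that `ψ s` is an initial segment of `κ s` for all `s`. -/
def Cone {S : Type*} (ψ : S → List Bool) : Set (CantorPow S) :=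
  {κ | ∀ s, ∀ i : Fin (ψ s).length, κ s i = (ψ s).get i}

/-- Deleting the prefixes `ψ s`; on `B(ψ)` this is the inverse of `canonMap ψ`. -/
def dropPrefix {S : Type*} (ψ : S → List Bool) : CantorPow S → CantorPow S :=
  fun κ s n => κ s (n + (ψ s).length)

/-- The basic twist map `τ_γ`, given by `τ_γ(κ)(s) = κ(γ⁻¹ • s)`. -/
def twist {G : Type*} (S : Type*) [Group G] [MulAction G S] (γ : G) :
    CantorPow S → CantorPow S :=
  fun κ s => κ (γ⁻¹ • s)

/-- The twist homeomorphism `h_ψ ∘ τ_γ ∘ h_φ⁻¹ : B(φ) → B(ψ)`, as a globally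
defined function (its restriction to `B(φ)` is the twist homeomorphism). -/
def twistMap {G S : Type*} [Group G] [MulAction G S]
    (φ ψ : S → List Bool) (γ : G) : CantorPow S → CantorPow S :=
  canonMap ψ ∘ twist S γ ∘ dropPrefix φ

/-- A partition of `𝔠^S` into finitely many cones. -/
def IsConePartition {S : Type*} {n : ℕ} (φ : Fin n → S → List Bool) : Prop :=
  (∀ i, IsPrefixFun (φ i)) ∧
  (Pairwise fun i j => Disjoint (Cone (φ i)) (Cone (φ j))) ∧
  (⋃ i, Cone (φ i)) = Set.univ

/-- The group structure on self-homeomorphisms, with `(f * g) x = f (g x)`. -/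
instance Homeomorph.instGroup' {α : Type*} [TopologicalSpace α] : Group (α ≃ₜ α) where
  mul f g := g.trans f
  one := Homeomorph.refl α
  inv := Homeomorph.symm
  mul_assoc _ _ _ := rfl
  one_mul _ := rfl
  mul_one _ := rfl
  inv_mul_cancel f := Homeomorph.ext fun x => f.symm_apply_apply x

/-- Membership in the twisted Brin–Thompson group `SV_G`: `f` is a piecewise
twist homeomorphism with respect to finite cone partitions. -/
def InTwistedBT (G : Type*) {S : Type*} [Group G] [MulAction G S]
    (f : CantorPow S ≃ₜ CantorPow S) : Prop :=
  ∃ (n : ℕ) (φ ψ : Fin n → S → List Bool) (γ : Fin n → G),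
    IsConePartition φ ∧ IsConePartition ψ ∧
    ∀ i, Set.EqOn f (twistMap (φ i) (ψ i) (γ i)) (Cone (φ i))

/-- A group is finitely presented if it is the quotient of a finitely generated
free group by the normal closure of finitely many relators. -/
def IsFinitelyPresentedGroup (Γ : Type*) [Group Γ] : Prop :=
  ∃ (n : ℕ) (R : Set (FreeGroup (Fin n))), R.Finite ∧
    Nonempty (Γ ≃* FreeGroup (Fin n) ⧸ Subgroup.normalClosure R)

/-- An action is oligomorphic if for each `k ≥ 1` there are finitely many orbits
of `k`-element subsets. -/
def IsOligomorphic (G S : Type*) [Group G] [MulAction G S] : Prop :=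
  ∀ k : ℕ, 1 ≤ k → ∃ F : Finset (Set S),
    ∀ T : Set S, T.Finite → T.ncard = k → ∃ T₀ ∈ F, ∃ g : G, g • T = T₀

/-- The word metric with respect to a generating set `A`. -/
noncomputable def wordDist {Γ : Type*} [Group Γ] (A : Set Γ) (g h : Γ) : ℕ :=
  sInf {n | ∃ l : List Γ, l.length = n ∧ (∀ x ∈ l, x ∈ A ∨ x⁻¹ ∈ A) ∧ l.prod = g⁻¹ * h}

/-- A quasi-isometric embedding with respect to `ℕ`-valued metrics. -/
def IsQIEmbedding {X Y : Type*} (dX : X → X → ℕ) (dY : Y → Y → ℕ) (f : X → Y) : Prop :=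
  ∃ C D : ℝ, 1 ≤ C ∧ 0 ≤ D ∧ ∀ x y : X,
    (dX x y : ℝ) / C - D ≤ (dY (f x) (f y) : ℝ) ∧
    (dY (f x) (f y) : ℝ) ≤ C * (dX x y : ℝ) + D

/-!
On a cone `B(φ)` a twist map is conjugate, via the canonical homeomorphism `h_φ`, to a basic
twist `τ_γ`, and `τ_γ ∘ h_δ = h_{δ ∘ γ⁻¹} ∘ τ_γ`. Hence a twist map `B(φ) → B(ψ)` restricts,
on every subcone `B(φδ)`, to the twist map `B(φδ) → B(ψ (δ ∘ γ⁻¹))`, and twist maps with matching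
middle cone compose to twist maps. Two cones are either disjoint or meet in the cone of the
longer prefixes, so the range partition of `g` and the domain partition of `f` have a common
refinement by cones; transporting it by `g⁻¹` and by `f` exhibits `f ∘ g` as a piecewise twist
map. Inverses swap the two partitions and invert the twisting elements.
-/

section TwistedBrinThompson

variable {G S : Type*} [Group G] [MulAction G S]

lemma prepend_append (a b : List Bool) (x : Cantor) :
    prepend (a ++ b) x = prepend a (prepend b x) := by
  funext n
  simp only [prepend, List.length_append, List.get_eq_getElem]
  by_cases ha : n < a.length
  · rw [dif_pos (by omega), dif_pos ha, List.getElem_append_left ha]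
  · rw [dif_neg ha]
    by_cases hb : n - a.length < b.length
    · rw [dif_pos (by omega), dif_pos hb, List.getElem_append_right (by omega)]
    · rw [dif_neg (by omega), dif_neg hb, Nat.sub_sub]

lemma dropPrefix_canonMap (ψ : S → List Bool) (x : CantorPow S) :
    dropPrefix ψ (canonMap ψ x) = x := by
  funext s n
  simp [dropPrefix, canonMap, prepend]

lemma canonMap_dropPrefix {ψ : S → List Bool} {κ : CantorPow S} (hκ : κ ∈ Cone ψ) :
    canonMap ψ (dropPrefix ψ κ) = κ := by
  funext s n
  by_cases hn : n < (ψ s).length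
  · simp [canonMap, prepend, hn, hκ s ⟨n, hn⟩]
  · simp only [canonMap, prepend, dif_neg hn, dropPrefix]
    congr 1
    omega

lemma canonMap_mem_cone (ψ : S → List Bool) (x : CantorPow S) : canonMap ψ x ∈ Cone ψ := by
  intro s i
  simp [canonMap, prepend]

lemma range_canonMap (ψ : S → List Bool) : range (canonMap ψ) = Cone ψ :=
  Subset.antisymm (range_subset_iff.2 (canonMap_mem_cone ψ))
    fun _ hκ => ⟨_, canonMap_dropPrefix hκ⟩

lemma canonMap_append (φ δ : S → List Bool) (x : CantorPow S) :
    canonMap (fun s => φ s ++ δ s) x = canonMap φ (canonMap δ x) := by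
  funext s
  exact prepend_append _ _ _

lemma twist_canonMap (γ : G) (δ : S → List Bool) (x : CantorPow S) :
    twist S γ (canonMap δ x) = canonMap (fun s => δ (γ⁻¹ • s)) (twist S γ x) :=
  rfl

lemma twist_twist (γ₁ γ₂ : G) (x : CantorPow S) :
    twist S γ₁ (twist S γ₂ x) = twist S (γ₁ * γ₂) x := by
  funext s
  simp [twist, mul_smul]

lemma twist_one (x : CantorPow S) : twist S (1 : G) x = x := by
  funext s
  simp [twist]

lemma twist_surjective (γ : G) : Surjective (twist S γ) :=
  fun x => ⟨twist S γ⁻¹ x, by rw [twist_twist, mul_inv_cancel, twist_one]⟩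

lemma twistMap_canonMap (φ ψ : S → List Bool) (γ : G) (x : CantorPow S) :
    twistMap φ ψ γ (canonMap φ x) = canonMap ψ (twist S γ x) := by
  simp only [twistMap, comp_apply, dropPrefix_canonMap]

lemma twistMap_twistMap (φ χ ψ : S → List Bool) (γ₁ γ₂ : G) (κ : CantorPow S) :
    twistMap χ ψ γ₂ (twistMap φ χ γ₁ κ) = twistMap φ ψ (γ₂ * γ₁) κ := by
  simp only [twistMap, comp_apply, dropPrefix_canonMap, twist_twist]

lemma eqOn_twistMap_one (φ : S → List Bool) : EqOn (twistMap φ φ (1 : G)) id (Cone φ) :=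
  fun _ hκ => by simp only [twistMap, comp_apply, twist_one, canonMap_dropPrefix hκ, id]

lemma image_twistMap_cone (φ ψ : S → List Bool) (γ : G) :
    twistMap φ ψ γ '' Cone φ = Cone ψ := by
  rw [← range_canonMap, ← range_canonMap, ← range_comp,
    show twistMap φ ψ γ ∘ canonMap φ = canonMap ψ ∘ twist S γ from
      funext (twistMap_canonMap φ ψ γ), range_comp, (twist_surjective γ).range_eq, image_univ]

lemma eqOn_twistMap_append (φ ψ δ : S → List Bool) (γ : G) :
    EqOn (twistMap φ ψ γ) (twistMap (fun s => φ s ++ δ s) (fun s => ψ s ++ δ (γ⁻¹ • s)) γ)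
      (Cone fun s => φ s ++ δ s) := by
  intro κ hκ
  obtain ⟨x, rfl⟩ := range_canonMap _ ▸ hκ
  rw [twistMap_canonMap, canonMap_append, canonMap_append, twistMap_canonMap, twist_canonMap]

lemma IsPrefixFun.append {φ δ : S → List Bool} (hφ : IsPrefixFun φ) (hδ : IsPrefixFun δ) :
    IsPrefixFun fun s => φ s ++ δ s :=
  (hφ.union hδ).subset fun s hs => by
    by_contra h
    simp_all

lemma IsPrefixFun.comp_smul {δ : S → List Bool} (hδ : IsPrefixFun δ) (γ : G) :
    IsPrefixFun fun s => δ (γ • s) :=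
  hδ.preimage (MulAction.injective γ).injOn

lemma IsPrefixFun.drop {c : S → List Bool} (hc : IsPrefixFun c) (n : S → ℕ) :
    IsPrefixFun fun s => (c s).drop (n s) :=
  hc.subset fun s hs h => hs (by simp [h])

lemma cone_subset_cone_of_prefix {a c : S → List Bool} (h : ∀ s, a s <+: c s) :
    Cone c ⊆ Cone a := fun κ hκ s i => by
  simpa [(h s).getElem i.isLt] using hκ s ⟨i, (h s).length_le.trans_lt' i.isLt⟩

lemma prefix_of_mem_cone {a b : S → List Bool} {κ : CantorPow S} (ha : κ ∈ Cone a)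
    (hb : κ ∈ Cone b) {s : S} (hlen : (a s).length ≤ (b s).length) : a s <+: b s := by
  rw [List.prefix_iff_eq_take]
  refine List.ext_getElem (by simpa using hlen) fun i hia hib => ?_
  simpa using (ha s ⟨i, hia⟩).symm.trans (hb s ⟨i, by omega⟩)

/-- The prefix function of the cone `Cone a ∩ Cone b`, when this intersection is nonempty. -/
def coneMeet (a b : S → List Bool) : S → List Bool :=
  fun s => if (a s).length ≤ (b s).length then b s else a s

section ConeMeet

variable {a b : S → List Bool}

lemma coneMeet_eq_or (a b : S → List Bool) (s : S) :
    coneMeet a b s = a s ∨ coneMeet a b s = b s := by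
  unfold coneMeet
  split_ifs <;> simp

lemma prefix_coneMeet_left (h : (Cone a ∩ Cone b).Nonempty) (s : S) : a s <+: coneMeet a b s := by
  obtain ⟨κ, ha, hb⟩ := h
  unfold coneMeet
  split_ifs with hlen
  · exact prefix_of_mem_cone ha hb hlen
  · exact List.prefix_refl _

lemma prefix_coneMeet_right (h : (Cone a ∩ Cone b).Nonempty) (s : S) : b s <+: coneMeet a b s := by
  obtain ⟨κ, ha, hb⟩ := h
  unfold coneMeet
  split_ifs with hlen
  · exact List.prefix_refl _
  · exact prefix_of_mem_cone hb ha (by omega)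

lemma inter_cone_subset_cone_coneMeet : Cone a ∩ Cone b ⊆ Cone (coneMeet a b) := by
  rintro κ ⟨ha, hb⟩ s
  rcases coneMeet_eq_or a b s with h | h <;> rw [h]
  exacts [ha s, hb s]

lemma IsPrefixFun.coneMeet (ha : IsPrefixFun a) (hb : IsPrefixFun b) :
    IsPrefixFun (coneMeet a b) :=
  (ha.union hb).subset fun s hs =>
    (coneMeet_eq_or a b s).imp (fun h => by rwa [mem_ofPred_eq, h] at hs)
      (fun h => by rwa [mem_ofPred_eq, h] at hs)

end ConeMeet

def IsIndexedConePartition {ι : Type*} (φ : ι → S → List Bool) : Prop :=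
  (∀ i, IsPrefixFun (φ i)) ∧
  (Pairwise fun i j => Disjoint (Cone (φ i)) (Cone (φ j))) ∧
  (⋃ i, Cone (φ i)) = Set.univ

namespace IsIndexedConePartition

variable {ι κ : Type*}

lemma comp_equiv {φ : ι → S → List Bool} (hφ : IsIndexedConePartition φ) (e : κ ≃ ι) :
    IsIndexedConePartition (φ ∘ e) :=
  ⟨fun _ => hφ.1 _, fun _ _ hij => hφ.2.1 (e.injective.ne hij),
    (e.surjective.iUnion_comp fun i => Cone (φ i)).trans hφ.2.2⟩

lemma image {φ ψ : ι → S → List Bool} (hφ : IsIndexedConePartition φ)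
    (hψ : ∀ i, IsPrefixFun (ψ i)) (e : CantorPow S ≃ₜ CantorPow S)
    (h : ∀ i, e '' Cone (φ i) = Cone (ψ i)) : IsIndexedConePartition ψ := by
  refine ⟨hψ, fun i j hij => ?_, ?_⟩
  · change Disjoint (Cone (ψ i)) (Cone (ψ j))
    rw [← h i, ← h j]
    exact (disjoint_image_iff e.injective).2 (hφ.2.1 hij)
  · simp only [← h, ← image_iUnion, hφ.2.2, image_univ_of_surjective e.surjective]

lemma meet {a : ι → S → List Bool} {b : κ → S → List Bool} (ha : IsIndexedConePartition a)
    (hb : IsIndexedConePartition b) :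
    IsIndexedConePartition fun p : {p : ι × κ // (Cone (a p.1) ∩ Cone (b p.2)).Nonempty} =>
      coneMeet (a p.1.1) (b p.1.2) := by
  have hsub : ∀ p : {p : ι × κ // (Cone (a p.1) ∩ Cone (b p.2)).Nonempty},
      Cone (coneMeet (a p.1.1) (b p.1.2)) ⊆ Cone (a p.1.1) ∩ Cone (b p.1.2) := fun p =>
    subset_inter (cone_subset_cone_of_prefix (prefix_coneMeet_left p.2))
      (cone_subset_cone_of_prefix (prefix_coneMeet_right p.2))
  refine ⟨fun p => (ha.1 _).coneMeet (hb.1 _), fun p q hpq => ?_, ?_⟩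
  · have hne : p.1.1 ≠ q.1.1 ∨ p.1.2 ≠ q.1.2 := by
      by_contra! h
      exact hpq (Subtype.ext (Prod.ext h.1 h.2))
    rcases hne with h | h
    · exact (ha.2.1 h).mono ((hsub p).trans inter_subset_left) ((hsub q).trans inter_subset_left)
    · exact (hb.2.1 h).mono ((hsub p).trans inter_subset_right)
        ((hsub q).trans inter_subset_right)
  · refine eq_univ_of_forall fun κ => ?_
    obtain ⟨i, hi⟩ := mem_iUnion.1 (ha.2.2.symm ▸ mem_univ κ)
    obtain ⟨j, hj⟩ := mem_iUnion.1 (hb.2.2.symm ▸ mem_univ κ)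
    exact mem_iUnion.2 ⟨⟨(i, j), κ, hi, hj⟩, inter_cone_subset_cone_coneMeet ⟨hi, hj⟩⟩

end IsIndexedConePartition

lemma inTwistedBT_of_finite {ι : Type*} [Finite ι] {f : CantorPow S ≃ₜ CantorPow S}
    {φ ψ : ι → S → List Bool} {γ : ι → G} (hφ : IsIndexedConePartition φ)
    (hψ : IsIndexedConePartition ψ) (hf : ∀ i, EqOn f (twistMap (φ i) (ψ i) (γ i)) (Cone (φ i))) :
    InTwistedBT G f := by
  obtain ⟨n, ⟨e⟩⟩ := Finite.exists_equiv_fin ι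
  exact ⟨n, φ ∘ e.symm, ψ ∘ e.symm, γ ∘ e.symm, hφ.comp_equiv e.symm, hψ.comp_equiv e.symm,
    fun i => hf (e.symm i)⟩

section Pieces

variable {f g : CantorPow S → CantorPow S} {φ ψ c : S → List Bool} {γ : G}

lemma exists_eqOn_twistMap_of_prefix_dom (hf : EqOn f (twistMap φ ψ γ) (Cone φ))
    (hψ : IsPrefixFun ψ) (hc : IsPrefixFun c) (h : ∀ s, φ s <+: c s) :
    ∃ ψ', IsPrefixFun ψ' ∧ EqOn f (twistMap c ψ' γ) (Cone c) := by
  set δ : S → List Bool := fun s => (c s).drop (φ s).length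
  have hc_eq : (fun s => φ s ++ δ s) = c := funext fun s => List.prefix_iff_eq_append.1 (h s)
  have key := (hf.mono (cone_subset_cone_of_prefix fun s => List.prefix_append _ _)).trans
    (eqOn_twistMap_append φ ψ δ γ)
  rw [hc_eq] at key
  exact ⟨_, hψ.append ((hc.drop fun s => (φ s).length).comp_smul γ⁻¹), key⟩

lemma exists_eqOn_twistMap_of_prefix_cod (hf : EqOn f (twistMap φ ψ γ) (Cone φ))
    (hφ : IsPrefixFun φ) (hc : IsPrefixFun c) (h : ∀ s, ψ s <+: c s) :
    ∃ φ', IsPrefixFun φ' ∧ EqOn f (twistMap φ' c γ) (Cone φ') := by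
  set δ : S → List Bool := fun s => (c (γ • s)).drop (ψ (γ • s)).length
  have hc_eq : (fun s => ψ s ++ δ (γ⁻¹ • s)) = c := funext fun s => by
    simpa [δ] using List.prefix_iff_eq_append.1 (h s)
  have key := (hf.mono (cone_subset_cone_of_prefix fun s => List.prefix_append _ _)).trans
    (eqOn_twistMap_append φ ψ δ γ)
  rw [hc_eq] at key
  exact ⟨_, hφ.append ((hc.drop fun s => (ψ s).length).comp_smul γ), key⟩

lemma exists_eqOn_comp_twistMap {φ₁ ψ₁ φ₂ ψ₂ : S → List Bool} {γ₁ γ₂ : G}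
    (hg : EqOn g (twistMap φ₁ ψ₁ γ₁) (Cone φ₁)) (hf : EqOn f (twistMap φ₂ ψ₂ γ₂) (Cone φ₂))
    (hφ₁ : IsPrefixFun φ₁) (hψ₂ : IsPrefixFun ψ₂) (hc : IsPrefixFun c)
    (h₁ : ∀ s, ψ₁ s <+: c s) (h₂ : ∀ s, φ₂ s <+: c s) :
    ∃ Φ Ψ, IsPrefixFun Φ ∧ IsPrefixFun Ψ ∧ g '' Cone Φ = Cone c ∧ f '' Cone c = Cone Ψ ∧
      EqOn (f ∘ g) (twistMap Φ Ψ (γ₂ * γ₁)) (Cone Φ) := by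
  obtain ⟨Φ, hΦ, hgΦ⟩ := exists_eqOn_twistMap_of_prefix_cod hg hφ₁ hc h₁
  obtain ⟨Ψ, hΨ, hfΨ⟩ := exists_eqOn_twistMap_of_prefix_dom hf hψ₂ hc h₂
  have hg_image : g '' Cone Φ = Cone c := by rw [hgΦ.image_eq, image_twistMap_cone]
  refine ⟨Φ, Ψ, hΦ, hΨ, hg_image, by rw [hfΨ.image_eq, image_twistMap_cone], fun κ hκ => ?_⟩
  rw [comp_apply, hfΨ (hg_image ▸ mem_image_of_mem g hκ), hgΦ hκ, twistMap_twistMap]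

end Pieces

theorem inTwistedBT_one : InTwistedBT G (1 : CantorPow S ≃ₜ CantorPow S) := by
  have hcone : Cone (fun _ : S => ([] : List Bool)) = univ :=
    eq_univ_of_forall fun _ _ i => i.elim0
  have hpart : IsIndexedConePartition fun _ : Unit => fun _ : S => ([] : List Bool) :=
    ⟨fun _ => by simp [IsPrefixFun], fun _ _ h => (h rfl).elim, by simp only [hcone, iUnion_const]⟩
  exact inTwistedBT_of_finite (γ := fun _ => 1) hpart hpart fun _ _ hκ =>
    (eqOn_twistMap_one _ hκ).symm

variable {f g : CantorPow S ≃ₜ CantorPow S}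

theorem InTwistedBT.inv (hf : InTwistedBT G f) : InTwistedBT G f⁻¹ := by
  obtain ⟨n, φ, ψ, γ, hφ, hψ, hE⟩ := hf
  refine ⟨n, ψ, φ, fun i => (γ i)⁻¹, hψ, hφ, fun i => ?_⟩
  rw [← image_twistMap_cone (φ i) (ψ i) (γ i), ← (hE i).image_eq]
  rintro _ ⟨κ, hκ, rfl⟩
  change f.symm (f κ) = _
  rw [f.symm_apply_apply, hE i hκ, twistMap_twistMap, inv_mul_cancel, eqOn_twistMap_one _ hκ, id]

theorem InTwistedBT.mul (hf : InTwistedBT G f) (hg : InTwistedBT G g) :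
    InTwistedBT G (f * g) := by
  obtain ⟨m, φf, ψf, γf, hφf, hψf, hf⟩ := hf
  obtain ⟨n, φg, ψg, γg, hφg, hψg, hg⟩ := hg
  have hc := IsIndexedConePartition.meet (a := ψg) (b := φf) hψg hφf
  have pieces := fun p : {p : Fin n × Fin m // (Cone (ψg p.1) ∩ Cone (φf p.2)).Nonempty} =>
    exists_eqOn_comp_twistMap (hg p.1.1) (hf p.1.2) (hφg.1 _) (hψf.1 _) (hc.1 p)
      (prefix_coneMeet_left p.2) (prefix_coneMeet_right p.2)
  choose Φ Ψ hΦ hΨ hgΦ hfΨ hE using pieces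
  exact inTwistedBT_of_finite
    (hc.image hΦ g.symm fun p => by rw [← hgΦ, g.image_symm, g.preimage_image])
    (hc.image hΨ f hfΨ) hE

def twistedBrinThompson (G S : Type*) [Group G] [MulAction G S] :
    Subgroup (CantorPow S ≃ₜ CantorPow S) where
  carrier := {f | InTwistedBT G f}
  one_mem' := inTwistedBT_one
  mul_mem' := InTwistedBT.mul
  inv_mem' := InTwistedBT.inv

end TwistedBrinThompson

theorem stmt5_general (G S : Type*) [Group G] [MulAction G S] :
    InTwistedBT G (1 : CantorPow S ≃ₜ CantorPow S) ∧
    (∀ f g : CantorPow S ≃ₜ CantorPow S,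
      InTwistedBT G f → InTwistedBT G g → InTwistedBT G (f * g)) ∧
    (∀ f : CantorPow S ≃ₜ CantorPow S, InTwistedBT G f → InTwistedBT G f⁻¹) ∧
    ∃ H : Subgroup (CantorPow S ≃ₜ CantorPow S),
      (H : Set (CantorPow S ≃ₜ CantorPow S)) = {f | InTwistedBT G f} :=
  ⟨inTwistedBT_one, fun _ _ => InTwistedBT.mul, fun _ => InTwistedBT.inv,
    twistedBrinThompson G S, rfl⟩

/-- The set `SV_G` of all homeomorphisms of `𝔠^S` that are piecewise
twist homeomorphisms (with respect to finite cone partitions) is a subgroup of the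
group of homeomorphisms of `𝔠^S`: it contains the identity and is closed under
composition and inversion. -/
theorem stmt5 (G S : Type*) [Group G] [MulAction G S] [FaithfulSMul G S] :
    InTwistedBT G (1 : CantorPow S ≃ₜ CantorPow S) ∧
    (∀ f g : CantorPow S ≃ₜ CantorPow S,
      InTwistedBT G f → InTwistedBT G g → InTwistedBT G (f * g)) ∧
    (∀ f : CantorPow S ≃ₜ CantorPow S, InTwistedBT G f → InTwistedBT G f⁻¹) ∧
    ∃ H : Subgroup (CantorPow S ≃ₜ CantorPow S),
      (H : Set (CantorPow S ≃ₜ CantorPow S)) = {f | InTwistedBT G f} :=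
  stmt5_general G S
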